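/- Let ℓ ≥ 1 be an integer and assume X_{ℓ-1}⁺ = S. Fix an integer k with 0 < k ≤ ℓ, an integer m ≥ 1 with k − m ≥ 0, and an integer l with 0 < l ≤ k − m + 1. For 0 ≤ j ≤ l define H_j = X_{j-1}(X_j ∩ Y_{k-j}) and J_j = X_{j-1}(X_j ∩ Y_{k-j-m}), and define H_{[0,l]} = {(b₀,…,b_l) ∈ B^{l+1} : b_j ∈ H_j for all 0 ≤ j ≤ l, and b_j⁺ = b_{j+1}⁻ for all 0 ≤ j < l}, and J_{[0,l]} analogously. Then there exists a right transversal T of J_{[0,l]} in H_{[0,l]} (a subset of H_{[0,l]} meeting each right coset of J_{[0,l]} in exactly one element) such that for every 0 ≤ j ≤ l the j-th coordinate map t ↦ t_j is injective on T and the set {t_j : t ∈ T} is a right transversal of J_j in H_j. -/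

import Mathlib

open Pointwise

namespace GroupCodes

variable {S : Type*} [Group S]

/-- The subgroups `Xₙ` of the branch group `B ≤ S × S`: `X₀ = {b ∈ B : b⁻ = 1}` and
`X_{n+1} = {b ∈ B : b⁻ ∈ Xₙ⁺}` (here `b⁻ = b.1`, `b⁺ = b.2`, `U⁺ = snd '' U`). -/
def Xnat (B : Subgroup (S × S)) : ℕ → Subgroup (S × S)
  | 0 => B ⊓ (MonoidHom.fst S S).ker
  | n + 1 => B ⊓ (Subgroup.map (MonoidHom.snd S S) (Xnat B n)).comap (MonoidHom.fst S S)

/-- The subgroups `Yₙ` of the branch group `B ≤ S × S`: `Y₀ = {b ∈ B : b⁺ = 1}` and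
`Y_{n+1} = {b ∈ B : b⁺ ∈ Yₙ⁻}`. -/
def Ynat (B : Subgroup (S × S)) : ℕ → Subgroup (S × S)
  | 0 => B ⊓ (MonoidHom.snd S S).ker
  | n + 1 => B ⊓ (Subgroup.map (MonoidHom.fst S S) (Ynat B n)).comap (MonoidHom.snd S S)

/-- `X i` for an integer index `i`, trivial for `i < 0`. -/
def X (B : Subgroup (S × S)) (i : ℤ) : Subgroup (S × S) :=
  if i < 0 then ⊥ else Xnat B i.toNat

/-- `Y i` for an integer index `i`, trivial for `i < 0`. -/
def Y (B : Subgroup (S × S)) (i : ℤ) : Subgroup (S × S) :=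
  if i < 0 then ⊥ else Ynat B i.toNat

/-- The next-branch set `N(U) = {b ∈ B : b⁻ ∈ U⁺}`. -/
def N (B U : Subgroup (S × S)) : Subgroup (S × S) :=
  B ⊓ (Subgroup.map (MonoidHom.snd S S) U).comap (MonoidHom.fst S S)

/-- The previous-branch set `P(U) = {b ∈ B : b⁺ ∈ U⁻}`. -/
def P (B U : Subgroup (S × S)) : Subgroup (S × S) :=
  B ⊓ (Subgroup.map (MonoidHom.fst S S) U).comap (MonoidHom.snd S S)

/-- `IsQuotIso J H J' H'` says that `J` (viewed inside `H`) is normal in `H`, `J'` is normal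
in `H'`, and there is a group isomorphism `H / J ≅ H' / J'`. -/
def IsQuotIso {G₁ G₂ : Type*} [Group G₁] [Group G₂]
    (J H : Subgroup G₁) (J' H' : Subgroup G₂) : Prop :=
  (J.subgroupOf H).Normal ∧ (J'.subgroupOf H').Normal ∧
    ∀ [(J.subgroupOf H).Normal] [(J'.subgroupOf H').Normal],
      Nonempty ((H ⧸ J.subgroupOf H) ≃* (H' ⧸ J'.subgroupOf H'))

/-- `T` is a right transversal of `J` inside `H`: `T ⊆ H` and `T` meets every right coset
of `J` contained in `H` in exactly one element. -/
def IsRightTransversalIn {G : Type*} [Group G] (J H : Subgroup G) (T : Set G) : Prop :=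
  T ⊆ (H : Set G) ∧ ∀ h ∈ H, ∃! t, t ∈ T ∧ t * h⁻¹ ∈ J

/-- The group of trellis path segments `(b₀, …, bₙ)` with `b_j ∈ F j` and matching states
`b_j⁺ = b_{j+1}⁻`; a subgroup of the direct product `(S × S)^{n+1}`. -/
def chainSubgroup (n : ℕ) (F : ℤ → Subgroup (S × S)) : Subgroup (Fin (n + 1) → S × S) where
  carrier := {b | (∀ i : Fin (n + 1), b i ∈ F (i : ℤ)) ∧
    ∀ i : Fin n, (b i.castSucc).2 = (b i.succ).1}
  one_mem' := ⟨fun _ => one_mem _, fun _ => rfl⟩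
  mul_mem' := by
    rintro a b ⟨ha1, ha2⟩ ⟨hb1, hb2⟩
    refine ⟨fun i => mul_mem (ha1 i) (hb1 i), fun i => ?_⟩
    simp only [Pi.mul_apply, Prod.snd_mul, Prod.fst_mul, ha2 i, hb2 i]
  inv_mem' := by
    rintro a ⟨ha1, ha2⟩
    refine ⟨fun i => inv_mem (ha1 i), fun i => ?_⟩
    simp only [Pi.inv_apply, Prod.snd_inv, Prod.fst_inv, ha2 i]

/-- `U ⨝ N(U)`: the group of trellis path segments `(b, b')` of length two with `b ∈ U`,
`b' ∈ N(U)` and `b⁺ = b'⁻`; a subgroup of the direct product `(S × S) × (S × S)`. -/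
def JoinN (B U : Subgroup (S × S)) : Subgroup ((S × S) × (S × S)) where
  carrier := {p | p.1 ∈ U ∧ p.2 ∈ N B U ∧ p.1.2 = p.2.1}
  one_mem' := ⟨one_mem _, one_mem _, rfl⟩
  mul_mem' := by
    rintro a b ⟨ha1, ha2, ha3⟩ ⟨hb1, hb2, hb3⟩
    exact ⟨mul_mem ha1 hb1, mul_mem ha2 hb2, by
      simp only [Prod.fst_mul, Prod.snd_mul, ha3, hb3]⟩
  inv_mem' := by
    rintro a ⟨ha1, ha2, ha3⟩
    exact ⟨inv_mem ha1, inv_mem ha2, by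
      simp only [Prod.fst_inv, Prod.snd_inv, ha3]⟩

/-- `H_j = X_{j-1}(X_j ∩ Y_{k-j})` (as a subgroup, realized as the join). -/
def HH (B : Subgroup (S × S)) (k j : ℤ) : Subgroup (S × S) :=
  X B (j - 1) ⊔ (X B j ⊓ Y B (k - j))

/-- `J_j = X_{j-1}(X_j ∩ Y_{k-j-m})` (as a subgroup, realized as the join). -/
def JJ (B : Subgroup (S × S)) (k m j : ℤ) : Subgroup (S × S) :=
  X B (j - 1) ⊔ (X B j ⊓ Y B (k - j - m))


/-! Write `H_i`, `J_i` for `X_{i-1}(X_i ∩ Y_{r-i})` with `r = k`, `r = k - m`. For every `r` the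
right states of `H_i` are exactly the left states of `H_{i+1}` (one inclusion uses `B⁻ = S`), so
every branch of `H_j` extends to a chain. A chain of `H_{[0,l]}` lies in `J_{[0,l]}` as soon as one
of its branches `b_j` lies in `J_j`. Forward, because `X₀ ≤ J_{i+1}`: a branch of `B` is determined
modulo `X₀` by its left state. Backward, because a branch of `X_i` is determined modulo `X_i ∩ Y₀`
by its right state, and `X_i ∩ Y₀ ≤ J_i` for `i ≤ k - m`, which `l ≤ k - m + 1` guarantees along the
chain. Hence the `j`-th projection maps `H_{[0,l]}` onto `H_j` with `J_{[0,l]}` the full preimage of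
`J_j`, and any right transversal of `J_{[0,l]}` in `H_{[0,l]}` projects injectively onto a right
transversal of `J_j` in `H_j`. -/

section Transversal

variable {G G' : Type*} [Group G] [Group G']

lemma exists_isRightTransversalIn {J H : Subgroup G} (hJH : J ≤ H) :
    ∃ T, IsRightTransversalIn J H T := by
  obtain ⟨T, hT, -⟩ := J.exists_isComplement_right 1
  refine ⟨T ∩ H, Set.inter_subset_right, fun h hh => ?_⟩
  obtain ⟨⟨t, ht⟩, hJ, huniq⟩ := Subgroup.isComplement_iff_existsUnique_mul_inv_mem.mp hT h
  have hJ' : t * h⁻¹ ∈ J := by simpa using J.inv_mem hJ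
  have htH : t ∈ H := by simpa using H.mul_mem (hJH hJ') hh
  refine ⟨t, ⟨⟨ht, htH⟩, hJ'⟩, fun t' ⟨⟨ht', _⟩, hJt'⟩ => ?_⟩
  exact congrArg Subtype.val (huniq ⟨t', ht'⟩ (by simpa using J.inv_mem hJt'))

lemma IsRightTransversalIn.image {J H : Subgroup G} {J' H' : Subgroup G'} {T : Set G}
    {φ : G →* G'} (hT : IsRightTransversalIn J H T) (hH : H.map φ = H')
    (hJ : J = H ⊓ J'.comap φ) :
    Set.InjOn φ T ∧ IsRightTransversalIn J' H' (φ '' T) := by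
  obtain ⟨hTH, hTuniq⟩ := hT
  have eq_of_map_mem : ∀ t ∈ T, ∀ t' ∈ T, φ t * (φ t')⁻¹ ∈ J' → t = t' := by
    intro t ht t' ht' h
    have htt' : t * t'⁻¹ ∈ J :=
      hJ ▸ Subgroup.mem_inf.mpr ⟨mul_mem (hTH ht) (inv_mem (hTH ht')), by simpa using h⟩
    exact (hTuniq t' (hTH ht')).unique ⟨ht, htt'⟩ ⟨ht', by simp⟩
  refine ⟨fun t ht t' ht' h => eq_of_map_mem t ht t' ht' (by simp [h]), ?_, fun h' hh' => ?_⟩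
  · rintro _ ⟨t, ht, rfl⟩
    exact hH ▸ Subgroup.mem_map_of_mem φ (hTH ht)
  obtain ⟨h, hh, rfl⟩ := Subgroup.mem_map.mp (hH ▸ hh')
  obtain ⟨t, ⟨ht, htJ⟩, -⟩ := hTuniq h hh
  have hφt : φ t * (φ h)⁻¹ ∈ J' := by
    simpa using (hJ ▸ htJ : t * h⁻¹ ∈ H ⊓ J'.comap φ).2
  refine ⟨φ t, ⟨⟨t, ht, rfl⟩, hφt⟩, ?_⟩
  rintro _ ⟨⟨t', ht', rfl⟩, ht'J⟩
  have hsplit : φ t' * (φ t)⁻¹ = φ t' * (φ h)⁻¹ * (φ t * (φ h)⁻¹)⁻¹ := by group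
  rw [eq_of_map_mem t' ht' t ht (hsplit ▸ mul_mem ht'J (inv_mem hφt))]

end Transversal

variable {B U V : Subgroup (S × S)}

section NextPrevious

lemma N_mono (h : U ≤ V) : N B U ≤ N B V :=
  inf_le_inf_left B (Subgroup.comap_mono (Subgroup.map_mono h))

lemma P_mono (h : U ≤ V) : P B U ≤ P B V :=
  inf_le_inf_left B (Subgroup.comap_mono (Subgroup.map_mono h))

lemma map_fst_N_le : (N B U).map (MonoidHom.fst S S) ≤ U.map (MonoidHom.snd S S) :=
  Subgroup.map_le_iff_le_comap.mpr inf_le_right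

lemma map_snd_le_map_fst_N (hB1 : B.map (MonoidHom.fst S S) = ⊤) :
    U.map (MonoidHom.snd S S) ≤ (N B U).map (MonoidHom.fst S S) := by
  intro s hs
  obtain ⟨b, hb, rfl⟩ := Subgroup.mem_map.mp (hB1 ▸ Subgroup.mem_top s : s ∈ B.map _)
  exact Subgroup.mem_map_of_mem _ ⟨hb, hs⟩

lemma map_fst_N_inf_le (hU : U ≤ B) :
    (N B U ⊓ V).map (MonoidHom.fst S S) ≤ (U ⊓ P B V).map (MonoidHom.snd S S) := by
  rintro _ ⟨b, ⟨⟨-, hbU⟩, hbV⟩, rfl⟩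
  obtain ⟨u, hu, hub⟩ := Subgroup.mem_map.mp hbU
  have huP : u ∈ P B V :=
    Subgroup.mem_inf.mpr ⟨hU hu, Subgroup.mem_comap.mpr (hub ▸ Subgroup.mem_map_of_mem _ hbV)⟩
  exact ⟨u, Subgroup.mem_inf.mpr ⟨hu, huP⟩, hub⟩

lemma map_snd_inf_P_le (hV : V ≤ B) :
    (U ⊓ P B V).map (MonoidHom.snd S S) ≤ (N B U ⊓ V).map (MonoidHom.fst S S) := by
  rintro _ ⟨b, ⟨hbU, -, hbV⟩, rfl⟩
  obtain ⟨v, hv, hvb⟩ := Subgroup.mem_map.mp hbV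
  have hvN : v ∈ N B U :=
    Subgroup.mem_inf.mpr ⟨hV hv, Subgroup.mem_comap.mpr (hvb ▸ Subgroup.mem_map_of_mem _ hbU)⟩
  exact ⟨v, Subgroup.mem_inf.mpr ⟨hvN, hv⟩, hvb⟩

end NextPrevious

section XY

lemma X_of_neg {i : ℤ} (hi : i < 0) : X B i = ⊥ := if_pos hi

lemma Y_of_neg {i : ℤ} (hi : i < 0) : Y B i = ⊥ := if_pos hi

lemma X_zero : X B 0 = B ⊓ (MonoidHom.fst S S).ker := if_neg (lt_irrefl 0)

lemma Y_zero : Y B 0 = B ⊓ (MonoidHom.snd S S).ker := if_neg (lt_irrefl 0)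

lemma X_add_one {i : ℤ} (hi : 0 ≤ i + 1) : X B (i + 1) = N B (X B i) := by
  rcases (show i = -1 ∨ 0 ≤ i by omega) with rfl | hi₀
  · rw [neg_add_cancel, X_zero, X_of_neg (by norm_num), N, Subgroup.map_bot,
      MonoidHom.comap_bot]
  · rw [X, if_neg (by omega), X, if_neg (by omega), show (i + 1).toNat = i.toNat + 1 by omega]
    rfl

lemma Y_add_one {i : ℤ} (hi : 0 ≤ i + 1) : Y B (i + 1) = P B (Y B i) := by
  rcases (show i = -1 ∨ 0 ≤ i by omega) with rfl | hi₀
  · rw [neg_add_cancel, Y_zero, Y_of_neg (by norm_num), P, Subgroup.map_bot,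
      MonoidHom.comap_bot]
  · rw [Y, if_neg (by omega), Y, if_neg (by omega), show (i + 1).toNat = i.toNat + 1 by omega]
    rfl

lemma X_add_one_le (i : ℤ) : X B (i + 1) ≤ N B (X B i) := by
  by_cases hi : 0 ≤ i + 1
  · exact (X_add_one hi).le
  · rw [X_of_neg (by omega)]
    exact bot_le

lemma Y_add_one_le (i : ℤ) : Y B (i + 1) ≤ P B (Y B i) := by
  by_cases hi : 0 ≤ i + 1
  · exact (Y_add_one hi).le
  · rw [Y_of_neg (by omega)]
    exact bot_le

lemma X_le_B (i : ℤ) : X B i ≤ B := by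
  simpa using (X_add_one_le (i - 1)).trans inf_le_left

lemma Y_le_B (i : ℤ) : Y B i ≤ B := by
  simpa using (Y_add_one_le (i - 1)).trans inf_le_left

lemma X_mono : Monotone (X B) := by
  refine monotone_int_of_le_succ fun i => ?_
  rcases lt_or_ge i (-1) with hi | hi
  · rw [X_of_neg (by omega)]
    exact bot_le
  induction i, hi using Int.leInduction with
  | base => rw [X_of_neg (by norm_num)]; exact bot_le
  | succ i hi ih => rw [X_add_one (by omega), X_add_one (by omega)]; exact N_mono ih

lemma Y_mono : Monotone (Y B) := by
  refine monotone_int_of_le_succ fun i => ?_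
  rcases lt_or_ge i (-1) with hi | hi
  · rw [Y_of_neg (by omega)]
    exact bot_le
  induction i, hi using Int.leInduction with
  | base => rw [Y_of_neg (by norm_num)]; exact bot_le
  | succ i hi ih => rw [Y_add_one (by omega), Y_add_one (by omega)]; exact P_mono ih

lemma map_snd_X_le (hB1 : B.map (MonoidHom.fst S S) = ⊤) (i : ℤ) :
    (X B i).map (MonoidHom.snd S S) ≤ (X B (i + 1)).map (MonoidHom.fst S S) := by
  by_cases hi : 0 ≤ i + 1
  · rw [X_add_one hi]
    exact map_snd_le_map_fst_N hB1
  · rw [X_of_neg (by omega), Subgroup.map_bot]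
    exact bot_le

lemma map_fst_X_le (i : ℤ) :
    (X B (i + 1)).map (MonoidHom.fst S S) ≤ (X B i).map (MonoidHom.snd S S) :=
  (Subgroup.map_mono (X_add_one_le i)).trans map_fst_N_le

lemma map_snd_X_inf_Y_le (i j : ℤ) :
    (X B i ⊓ Y B (j + 1)).map (MonoidHom.snd S S) ≤
      (X B (i + 1) ⊓ Y B j).map (MonoidHom.fst S S) := by
  by_cases hi : 0 ≤ i + 1
  · rw [X_add_one hi]
    exact (Subgroup.map_mono (inf_le_inf_left _ (Y_add_one_le j))).trans
      (map_snd_inf_P_le (Y_le_B j))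
  · rw [X_of_neg (by omega), bot_inf_eq, Subgroup.map_bot]
    exact bot_le

lemma map_fst_X_inf_Y_le (i j : ℤ) :
    (X B (i + 1) ⊓ Y B j).map (MonoidHom.fst S S) ≤
      (X B i ⊓ Y B (j + 1)).map (MonoidHom.snd S S) := by
  by_cases hj : 0 ≤ j + 1
  · rw [Y_add_one hj]
    exact (Subgroup.map_mono (inf_le_inf_right _ (X_add_one_le i))).trans
      (map_fst_N_inf_le (X_le_B i))
  · rw [Y_of_neg (by omega), inf_bot_eq, Subgroup.map_bot]
    exact bot_le

end XY

section HH

lemma JJ_eq_HH (k m : ℤ) : JJ B k m = HH B (k - m) := by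
  funext j
  rw [JJ, HH, sub_right_comm]

lemma HH_le_X (r i : ℤ) : HH B r i ≤ X B i :=
  sup_le (X_mono (by omega)) inf_le_left

lemma HH_le_B (r i : ℤ) : HH B r i ≤ B :=
  (HH_le_X r i).trans (X_le_B i)

lemma HH_mono {r r' : ℤ} (h : r ≤ r') (i : ℤ) : HH B r i ≤ HH B r' i :=
  sup_le_sup_left (inf_le_inf_left _ (Y_mono (by omega))) _

lemma map_snd_HH_le (hB1 : B.map (MonoidHom.fst S S) = ⊤) (r i : ℤ) :
    (HH B r i).map (MonoidHom.snd S S) ≤ (HH B r (i + 1)).map (MonoidHom.fst S S) := by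
  have hX := map_snd_X_le hB1 (i - 1)
  have hXY := map_snd_X_inf_Y_le (B := B) i (r - (i + 1))
  rw [sub_add_cancel] at hX
  rw [show r - (i + 1) + 1 = r - i by ring] at hXY
  rw [HH, HH, Subgroup.map_sup, Subgroup.map_sup, add_sub_cancel_right]
  exact sup_le_sup hX hXY

lemma map_fst_HH_le (r i : ℤ) :
    (HH B r (i + 1)).map (MonoidHom.fst S S) ≤ (HH B r i).map (MonoidHom.snd S S) := by
  have hX := map_fst_X_le (B := B) (i - 1)
  have hXY := map_fst_X_inf_Y_le (B := B) i (r - (i + 1))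
  rw [sub_add_cancel] at hX
  rw [show r - (i + 1) + 1 = r - i by ring] at hXY
  rw [HH, HH, Subgroup.map_sup, Subgroup.map_sup, add_sub_cancel_right]
  exact sup_le_sup hX hXY

lemma mem_HH_of_fst_mem {r i : ℤ} (hi : 1 ≤ i) {b : S × S} (hb : b ∈ B)
    (h : b.1 ∈ (HH B r i).map (MonoidHom.fst S S)) : b ∈ HH B r i := by
  obtain ⟨e, he, he1⟩ := Subgroup.mem_map.mp h
  have hbe : b * e⁻¹ ∈ X B (i - 1) := by
    refine X_mono (by omega : (0 : ℤ) ≤ i - 1) ?_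
    rw [X_zero]
    refine Subgroup.mem_inf.mpr ⟨mul_mem hb (inv_mem (HH_le_B r i he)), ?_⟩
    exact MonoidHom.mem_ker.mpr (by simp [← he1])
  have := mul_mem ((le_sup_left : X B (i - 1) ≤ HH B r i) hbe) he
  rwa [inv_mul_cancel_right] at this

lemma mem_HH_of_snd_mem {r i : ℤ} (hir : i ≤ r) {b : S × S} (hb : b ∈ X B i)
    (h : b.2 ∈ (HH B r i).map (MonoidHom.snd S S)) : b ∈ HH B r i := by
  obtain ⟨e, he, he2⟩ := Subgroup.mem_map.mp h
  have hbe : b * e⁻¹ ∈ X B i ⊓ Y B (r - i) := by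
    refine Subgroup.mem_inf.mpr
      ⟨mul_mem hb (inv_mem (HH_le_X r i he)), Y_mono (by omega : (0 : ℤ) ≤ r - i) ?_⟩
    rw [Y_zero]
    refine Subgroup.mem_inf.mpr ⟨mul_mem (X_le_B i hb) (inv_mem (HH_le_B r i he)), ?_⟩
    exact MonoidHom.mem_ker.mpr (by simp [← he2])
  have := mul_mem ((le_sup_right : X B i ⊓ Y B (r - i) ≤ HH B r i) hbe) he
  rwa [inv_mul_cancel_right] at this

end HH

section Chain

variable {n : ℕ} {F : ℤ → Subgroup (S × S)}

lemma chainSubgroup_mono {F' : ℤ → Subgroup (S × S)} (h : ∀ i, F i ≤ F' i) :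
    chainSubgroup n F ≤ chainSubgroup n F' :=
  fun _ hc => ⟨fun i => h i (hc.1 i), hc.2⟩

lemma snoc_mem_chainSubgroup {c : Fin (n + 1) → S × S} {b : S × S}
    (hc : c ∈ chainSubgroup n F) (hb : b ∈ F (n + 1)) (hcb : (c (Fin.last n)).2 = b.1) :
    (Fin.snoc c b : Fin (n + 2) → S × S) ∈ chainSubgroup (n + 1) F := by
  refine ⟨Fin.lastCases ?_ fun i => ?_, Fin.lastCases ?_ fun i => ?_⟩
  · simpa using hb
  · simpa using hc.1 i
  · simpa using hcb
  · rw [Fin.succ_castSucc, Fin.snoc_castSucc, Fin.snoc_castSucc]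
    exact hc.2 i

lemma exists_mem_chainSubgroup_apply_eq
    (hfwd : ∀ i, (F i).map (MonoidHom.snd S S) ≤ (F (i + 1)).map (MonoidHom.fst S S))
    (hbwd : ∀ i, (F (i + 1)).map (MonoidHom.fst S S) ≤ (F i).map (MonoidHom.snd S S))
    (j : Fin (n + 1)) {h : S × S} (hh : h ∈ F j) : ∃ c ∈ chainSubgroup n F, c j = h := by
  induction n generalizing h with
  | zero =>
    refine ⟨fun _ => h, ⟨fun i => ?_, fun i => i.elim0⟩, rfl⟩
    rwa [Subsingleton.elim (α := Fin 1) i j]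
  | succ n ih =>
    induction j using Fin.lastCases with
    | last =>
      obtain ⟨e, he, heh⟩ := hbwd n (Subgroup.mem_map_of_mem _ (by simpa using hh))
      obtain ⟨c, hc, hce⟩ := ih (Fin.last n) (by simpa using he)
      refine ⟨Fin.snoc c h, snoc_mem_chainSubgroup hc (by simpa using hh) ?_, by simp⟩
      simpa [hce] using heh
    | cast j =>
      obtain ⟨c, hc, hcj⟩ := ih j (by simpa using hh)
      obtain ⟨b, hb, hbc⟩ :=
        hfwd n (Subgroup.mem_map_of_mem _ (by simpa using hc.1 (Fin.last n)))
      exact ⟨Fin.snoc c b, snoc_mem_chainSubgroup hc hb hbc.symm, by simpa using hcj⟩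

lemma map_eval_chainSubgroup
    (hfwd : ∀ i, (F i).map (MonoidHom.snd S S) ≤ (F (i + 1)).map (MonoidHom.fst S S))
    (hbwd : ∀ i, (F (i + 1)).map (MonoidHom.fst S S) ≤ (F i).map (MonoidHom.snd S S))
    (j : Fin (n + 1)) :
    (chainSubgroup n F).map (Pi.evalMonoidHom (fun _ => S × S) j) = F j := by
  refine le_antisymm (Subgroup.map_le_iff_le_comap.mpr fun c hc => hc.1 j) fun h hh => ?_
  obtain ⟨c, hc, rfl⟩ := exists_mem_chainSubgroup_apply_eq hfwd hbwd j hh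
  exact Subgroup.mem_map_of_mem _ hc

lemma mem_chainSubgroup_HH_of_apply_zero_mem (hB1 : B.map (MonoidHom.fst S S) = ⊤)
    {r r' : ℤ} {c : Fin (n + 1) → S × S} (hc : c ∈ chainSubgroup n (HH B r))
    (h0 : c 0 ∈ HH B r' 0) : c ∈ chainSubgroup n (HH B r') := by
  refine ⟨fun j => ?_, hc.2⟩
  induction j using Fin.induction with
  | zero => simpa using h0
  | succ i ih =>
    rw [show ((i.succ : ℕ) : ℤ) = (i.castSucc : ℕ) + 1 by simp]
    refine mem_HH_of_fst_mem (by omega) (HH_le_B r _ (hc.1 _)) ?_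
    rw [← hc.2 i]
    exact map_snd_HH_le hB1 r' _ (Subgroup.mem_map_of_mem (MonoidHom.snd S S) ih)

lemma apply_zero_mem_HH_of_apply_mem {r r' : ℤ} (hn : (n : ℤ) ≤ r' + 1)
    {c : Fin (n + 1) → S × S} (hc : c ∈ chainSubgroup n (HH B r)) (j : Fin (n + 1))
    (hj : c j ∈ HH B r' j) : c 0 ∈ HH B r' 0 := by
  induction j using Fin.induction with
  | zero => simpa using hj
  | succ i ih =>
    apply ih
    refine mem_HH_of_snd_mem (by rw [Fin.val_castSucc]; omega) (HH_le_X r _ (hc.1 _)) ?_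
    rw [hc.2 i]
    rw [show ((i.succ : ℕ) : ℤ) = (i.castSucc : ℕ) + 1 by simp] at hj
    exact map_fst_HH_le r' _ (Subgroup.mem_map_of_mem (MonoidHom.fst S S) hj)

lemma chainSubgroup_HH_eq_inf_comap (hB1 : B.map (MonoidHom.fst S S) = ⊤) {r r' : ℤ}
    (hr : r' ≤ r) (hn : (n : ℤ) ≤ r' + 1) (j : Fin (n + 1)) :
    chainSubgroup n (HH B r') =
      chainSubgroup n (HH B r) ⊓ (HH B r' j).comap (Pi.evalMonoidHom (fun _ => S × S) j) := by
  refine le_antisymm (le_inf (chainSubgroup_mono (HH_mono hr)) fun c hc => hc.1 j) ?_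
  rintro c ⟨hc, hcj⟩
  exact mem_chainSubgroup_HH_of_apply_zero_mem hB1 hc (apply_zero_mem_HH_of_apply_mem hn hc j hcj)

end Chain

theorem exists_componentwise_transversal_general
    (B : Subgroup (S × S))
    (hB1 : Subgroup.map (MonoidHom.fst S S) B = ⊤)
    (k m l : ℤ)
    (hm : 1 ≤ m)
    (hl0 : 0 < l) (hl : l ≤ k - m + 1) :
    ∃ T : Set (Fin (l.toNat + 1) → S × S),
      IsRightTransversalIn (chainSubgroup l.toNat (JJ B k m))
        (chainSubgroup l.toNat (HH B k)) T ∧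
      ∀ j : Fin (l.toNat + 1),
        Set.InjOn (fun t => t j) T ∧
        IsRightTransversalIn (JJ B k m (j : ℤ)) (HH B k (j : ℤ)) ((fun t => t j) '' T) := by
  have hr : k - m ≤ k := by omega
  have hn : (l.toNat : ℤ) ≤ k - m + 1 := by omega
  rw [JJ_eq_HH]
  obtain ⟨T, hT⟩ :=
    exists_isRightTransversalIn (chainSubgroup_mono (n := l.toNat) (HH_mono (B := B) hr))
  refine ⟨T, hT, fun j => hT.image ?_ (chainSubgroup_HH_eq_inf_comap hB1 hr hn j)⟩
  exact map_eval_chainSubgroup (map_snd_HH_le hB1 k) (map_fst_HH_le k) j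

/-- there is a right transversal `T` of `J_{[0,l]}` in `H_{[0,l]}` such that
each coordinate map is injective on `T` and its image is a right transversal of `J_j` in
`H_j`. -/
theorem exists_componentwise_transversal
    (B : Subgroup (S × S))
    (hB1 : Subgroup.map (MonoidHom.fst S S) B = ⊤)
    (hB2 : Subgroup.map (MonoidHom.snd S S) B = ⊤)
    (ℓ k m l : ℤ) (hℓ : 1 ≤ ℓ)
    (hctl : Subgroup.map (MonoidHom.snd S S) (X B (ℓ - 1)) = ⊤)
    (hk0 : 0 < k) (hkℓ : k ≤ ℓ)
    (hm : 1 ≤ m) (hkm : 0 ≤ k - m)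
    (hl0 : 0 < l) (hl : l ≤ k - m + 1) :
    ∃ T : Set (Fin (l.toNat + 1) → S × S),
      IsRightTransversalIn (chainSubgroup l.toNat (JJ B k m))
        (chainSubgroup l.toNat (HH B k)) T ∧
      ∀ j : Fin (l.toNat + 1),
        Set.InjOn (fun t => t j) T ∧
        IsRightTransversalIn (JJ B k m (j : ℤ)) (HH B k (j : ℤ)) ((fun t => t j) '' T) :=
  exists_componentwise_transversal_general B hB1 k m l hm hl0 hl

end GroupCodes
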